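/- arXiv:2108.12321 — 3 statements merged into one kernel-verified Lean document; each statement's English description precedes it below -/
import Mathlib

section
/- Let u, v be two distinct points in the plane and let b1, b2 be two points strictly on the same side of the line through u and v, with b1 ≠ b2. Then at least one of the segments [u,b1], [b1,v] intersects at least one of the segments [u,b2], [b2,v] in a point other than u and v, or one of the two-segment paths u–b1–v, u–b2–v is contained in the region bounded by the other together with segment [u,v]. -/
abbrev Pt := EuclideanSpace ℝ (Fin 2)
noncomputable def cr (a b : Pt) : ℝ := a 0 * b 1 - a 1 * b 0

lemma cr_apply (a b : Pt) : cr a b = a 0 * b 1 - a 1 * b 0 := rfl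

/-- key geometric lemma -/
lemma key (u v b1 b2 : Pt)
    (hc : 0 < cr (v - u) (b1 - u) * cr (v - u) (b2 - u))
    (hb : 0 ≤ cr (b2 - u) (b1 - u) * cr (v - u) (b1 - u)) :
    b2 ∈ convexHull ℝ ({u, b1, v} : Set Pt) ∨
      ∃ p : Pt, p ∈ segment ℝ b1 v ∧ p ∈ segment ℝ u b2 ∧ p ≠ u ∧ p ≠ v := by
  set c1 := cr (v - u) (b1 - u) with hc1def
  set c2 := cr (v - u) (b2 - u) with hc2def
  have hc1 : c1 ≠ 0 := by intro h; rw [h] at hc; simp at hc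
  set α : ℝ := c2 / c1 with hα_def
  set β : ℝ := cr (b2 - u) (b1 - u) / c1 with hβ_def
  have hα : 0 < α := by
    rw [hα_def]
    rcases mul_pos_iff.mp hc with ⟨h1, h2⟩ | ⟨h1, h2⟩
    · exact div_pos h2 h1
    · exact div_pos_of_neg_of_neg h2 h1
  have hβ : 0 ≤ β := by
    rw [hβ_def]
    rcases mul_nonneg_iff.mp hb with ⟨h1, h2⟩ | ⟨h1, h2⟩
    · exact div_nonneg h1 (lt_of_le_of_ne h2 (Ne.symm hc1)).le
    · exact div_nonneg_iff.mpr (Or.inr ⟨h1, (lt_of_le_of_ne h2 hc1).le⟩)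
  have hαc : α * c1 = c2 := div_mul_cancel₀ _ hc1
  have hβc : β * c1 = cr (b2 - u) (b1 - u) := div_mul_cancel₀ _ hc1
  clear_value c1 c2 α β
  clear hα_def hβ_def
  have heq : b2 - u = α • (b1 - u) + β • (v - u) := by
    simp only [hc1def, hc2def, cr_apply] at hαc hβc
    have e0 : ((b2 - u) 0) * c1 = (α * (b1 - u) 0 + β * (v - u) 0) * c1 := by
      simp only [hc1def, cr_apply]
      linear_combination (-(b1 - u) 0) * hαc + (-(v - u) 0) * hβc
    have e1 : ((b2 - u) 1) * c1 = (α * (b1 - u) 1 + β * (v - u) 1) * c1 := by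
      simp only [hc1def, cr_apply]
      linear_combination (-(b1 - u) 1) * hαc + (-(v - u) 1) * hβc
    have h0 := mul_right_cancel₀ hc1 e0
    have h1 := mul_right_cancel₀ hc1 e1
    ext i
    fin_cases i <;> simp only [PiLp.add_apply, PiLp.smul_apply, smul_eq_mul] <;>
      [exact h0; exact h1]
  rcases le_or_gt (α + β) 1 with hle | hgt
  · -- b2 in triangle
    left
    have hαβ : 0 < α + β := by linarith
    have hz : ((α / (α + β)) • b1 + (β / (α + β)) • v) ∈ segment ℝ b1 v := by
      refine ⟨α / (α + β), β / (α + β), div_nonneg hα.le hαβ.le, div_nonneg hβ hαβ.le, ?_, rfl⟩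
      field_simp
    have h2 : ({u, b1, v} : Set Pt) = insert u {b1, v} := rfl
    rw [h2, convexHull_insert ⟨b1, by simp⟩, mem_convexJoin]
    refine ⟨u, rfl, (α / (α + β)) • b1 + (β / (α + β)) • v, by rwa [convexHull_pair], ?_⟩
    refine ⟨1 - (α + β), α + β, by linarith, hαβ.le, by ring, ?_⟩
    have hb2 : b2 = u + (α • (b1 - u) + β • (v - u)) := by
      rw [← heq]; abel
    rw [hb2]
    match_scalars <;> field_simp <;> ring
  · -- crossing point
    right
    set t : ℝ := 1 / (α + β) with ht_def
    have hαβ : 0 < α + β := by linarith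
    have ht0 : 0 < t := by positivity
    have ht1 : t < 1 := by rw [ht_def]; rw [div_lt_one hαβ]; linarith
    have htαβ : t * α + t * β = 1 := by rw [ht_def]; field_simp
    refine ⟨u + t • (b2 - u), ?_, ?_, ?_, ?_⟩
    · refine ⟨t * α, t * β, by positivity, by positivity, htαβ, ?_⟩
      have hbu : u + t • (b2 - u) = u + t • (α • (b1 - u) + β • (v - u)) := by rw [heq]
      rw [hbu]
      match_scalars <;> first | linear_combination htαβ | field_simp
    · exact ⟨1 - t, t, by linarith, ht0.le, by ring, by module⟩
    · intro h
      have : t • (b2 - u) = 0 := by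
        have := congrArg (· - u) h
        simpa using this
      have hb2u : b2 - u ≠ 0 := by
        intro h0
        rw [hc2def, h0] at hc
        simp [cr_apply] at hc
      exact hb2u (by simpa [smul_eq_zero, ht0.ne'] using this)
    · intro h
      have h2 : cr (v - u) (u + t • (b2 - u) - u) = cr (v - u) (v - u) := by rw [h]
      rw [show u + t • (b2 - u) - u = t • (b2 - u) by abel] at h2
      have h3 : cr (v - u) (t • (b2 - u)) = t * c2 := by
        rw [hc2def, cr_apply, cr_apply]
        simp only [PiLp.smul_apply, smul_eq_mul]
        ring
      have h4 : cr (v - u) (v - u) = 0 := by rw [cr_apply]; ring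
      rw [h3, h4] at h2
      have hc2 : c2 ≠ 0 := by intro hh; rw [hh] at hc; simp at hc
      rcases mul_eq_zero.mp h2 with h | h
      · exact ht0.ne' h
      · exact hc2 h

lemma cr_smul (d w : Pt) (r : ℝ) : cr d (r • w) = r * cr d w := by
  simp only [cr_apply, PiLp.smul_apply, smul_eq_mul]; ring

lemma cr_sub_smul (d a : Pt) (r : ℝ) : cr d (a - r • d) = cr d a := by
  simp only [cr_apply, PiLp.sub_apply, PiLp.smul_apply, smul_eq_mul]; ring

lemma cr_anticomm (a b : Pt) : cr a b = -cr b a := by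
  simp only [cr_apply]; ring

lemma exists_smul_of_cr_eq_zero (d w : Pt) (hd : d ≠ 0) (h : cr d w = 0) :
    ∃ r : ℝ, w = r • d := by
  have h0 : d 0 ≠ 0 ∨ d 1 ≠ 0 := by
    by_contra hcon
    push_neg at hcon
    exact hd (by ext i; fin_cases i <;> simp [hcon.1, hcon.2])
  unfold cr at h
  rcases h0 with h0 | h0
  · exact ⟨w 0 / d 0, by
      ext i; fin_cases i <;> (simp [PiLp.smul_apply]; (try field_simp); (try nlinarith))⟩
  · exact ⟨w 1 / d 1, by
      ext i; fin_cases i <;> (simp [PiLp.smul_apply]; (try field_simp); (try nlinarith))⟩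

lemma cr_ne_zero_of_not_mem (u v b : Pt) (huv : u ≠ v)
    (hb : b ∉ affineSpan ℝ ({u, v} : Set Pt)) : cr (v - u) (b - u) ≠ 0 := by
  intro h
  have hd : v - u ≠ 0 := sub_ne_zero.mpr (Ne.symm huv)
  obtain ⟨r, hr⟩ := exists_smul_of_cr_eq_zero _ _ hd h
  apply hb
  have hmem := smul_vsub_vadd_mem_affineSpan_pair r u v
  have hbe : b = r • (v -ᵥ u) +ᵥ u := by
    rw [vsub_eq_sub, vadd_eq_add, ← hr]; abel
  rwa [← hbe] at hmem

lemma mem_span_pair_diff (u v p : Pt) (hp : p ∈ affineSpan ℝ ({u, v} : Set Pt)) :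
    ∃ r : ℝ, p - u = r • (v - u) := by
  have h2 : (p - u) +ᵥ u ∈ affineSpan ℝ ({u, v} : Set Pt) := by
    simpa [vadd_eq_add, sub_add_cancel] using hp
  obtain ⟨r, hr⟩ := vadd_left_mem_affineSpan_pair.mp h2
  exact ⟨r, by rw [← hr, vsub_eq_sub]⟩

theorem stmt_0 (u v b1 b2 : Pt) (huv : u ≠ v) (hb12 : b1 ≠ b2)
    (hside : AffineSubspace.SSameSide (affineSpan ℝ {u, v}) b1 b2) :
    (∃ p : Pt, p ∈ (segment ℝ u b1 ∪ segment ℝ b1 v) ∧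
        p ∈ (segment ℝ u b2 ∪ segment ℝ b2 v) ∧ p ≠ u ∧ p ≠ v) ∨
      convexHull ℝ {u, b1, v} ⊆ convexHull ℝ {u, b2, v} ∨
      convexHull ℝ {u, b2, v} ⊆ convexHull ℝ {u, b1, v} := by
  obtain ⟨hW, hb1s, hb2s⟩ := hside
  set c1 := cr (v - u) (b1 - u) with hc1def
  set c2 := cr (v - u) (b2 - u) with hc2def
  have hc1 : c1 ≠ 0 := cr_ne_zero_of_not_mem u v b1 huv hb1s
  have hc2 : c2 ≠ 0 := cr_ne_zero_of_not_mem u v b2 huv hb2s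
  -- same sign
  have hcc : 0 < c1 * c2 := by
    obtain ⟨p1, hp1, p2, hp2, hray⟩ := hW
    rw [vsub_eq_sub, vsub_eq_sub] at hray
    have hx : b1 - p1 ≠ 0 := sub_ne_zero.mpr (fun h => hb1s (h ▸ hp1))
    have hy : b2 - p2 ≠ 0 := sub_ne_zero.mpr (fun h => hb2s (h ▸ hp2))
    obtain ⟨r, hr0, hrr⟩ := hray.exists_pos_left hx hy
    obtain ⟨r1, hr1⟩ := mem_span_pair_diff u v p1 hp1
    obtain ⟨r2, hr2⟩ := mem_span_pair_diff u v p2 hp2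
    have e1 : cr (v - u) (b1 - p1) = c1 := by
      have : b1 - p1 = (b1 - u) - r1 • (v - u) := by rw [← hr1]; abel
      rw [this, cr_sub_smul, hc1def]
    have e2 : cr (v - u) (b2 - p2) = c2 := by
      have : b2 - p2 = (b2 - u) - r2 • (v - u) := by rw [← hr2]; abel
      rw [this, cr_sub_smul, hc2def]
    have e3 : c2 = r * c1 := by
      rw [← e2, ← hrr, cr_smul, e1]
    rw [e3]
    have h2 : 0 < c1 ^ 2 := lt_of_le_of_ne (sq_nonneg c1) (Ne.symm (pow_ne_zero 2 hc1))
    calc (0:ℝ) < r * c1 ^ 2 := mul_pos hr0 h2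
    _ = c1 * (r * c1) := by ring
  -- dichotomy
  have hdi : 0 ≤ cr (b2 - u) (b1 - u) * c1 ∨ 0 ≤ cr (b1 - u) (b2 - u) * c2 := by
    rcases le_or_gt 0 (cr (b2 - u) (b1 - u) * c1) with h | h
    · exact Or.inl h
    · right
      rw [cr_anticomm (b1 - u) (b2 - u)]
      nlinarith [h, hcc, sq_nonneg (cr (b2 - u) (b1 - u))]
  rcases hdi with hdi | hdi
  · rcases key u v b1 b2 (hc1def ▸ hc2def ▸ hcc) (hc1def ▸ hdi) with hmem | ⟨p, hp1, hp2, hpu, hpv⟩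
    · right; right
      apply convexHull_min _ (convex_convexHull ℝ _)
      intro x hx
      rcases hx with rfl | rfl | rfl
      · exact subset_convexHull ℝ _ (by simp)
      · exact hmem
      · exact subset_convexHull ℝ _ (by simp)
    · exact Or.inl ⟨p, Or.inr hp1, Or.inl hp2, hpu, hpv⟩
  · have hcc' : 0 < cr (v - u) (b2 - u) * cr (v - u) (b1 - u) := by
      rw [← hc1def, ← hc2def]; linarith [mul_comm c1 c2, hcc]
    rcases key u v b2 b1 hcc' (hc2def ▸ hdi) with hmem | ⟨p, hp1, hp2, hpu, hpv⟩
    · right; left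
      apply convexHull_min _ (convex_convexHull ℝ _)
      intro x hx
      rcases hx with rfl | rfl | rfl
      · exact subset_convexHull ℝ _ (by simp)
      · exact hmem
      · exact subset_convexHull ℝ _ (by simp)
    · exact Or.inl ⟨p, Or.inl hp2, Or.inr hp1, hpu, hpv⟩
end

section
/- Let u, v, w be points in ℝ² with w not on the line through u and v. For any two points b1, b2 in the open triangle with vertices u, v, w, the triangles conv{u,b1,v} and conv{u,b2,v} either satisfy conv{u,b1,v} ⊆ conv{u,b2,v}, conv{u,b2,v} ⊆ conv{u,b1,v}, or there exists a point b' ∈ ([u,b1] ∪ [b1,v]) ∩ ([u,b2] ∪ [b2,v]) with b' ∉ {u,v}. -/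
/-! Write an apex as `b = a • u + c • v + t • w` in barycentric coordinates of the triangle `uvw`.
The ratios `c / t` and `a / t` determine the rays from `u` and from `v` through `b`. If both ratios
of `b₁` dominate those of `b₂`, then `b₁` is a convex combination of `u`, `b₂`, `v`; if they compare
in opposite directions, the side `[u, b₂]` crosses the side `[b₁, v]` (or symmetrically) at a point
with positive `w`-coordinate, hence different from `u` and `v`. -/

open Set AffineMap Module

section Barycentric

variable {E : Type*} [AddCommGroup E] [Module ℝ E]

theorem smul_add_smul_add_smul_mem_convexHull (x y z : E) {α β γ : ℝ} (hα : 0 ≤ α) (hβ : 0 ≤ β)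
    (hγ : 0 ≤ γ) (h : α + β + γ = 1) : α • x + β • y + γ • z ∈ convexHull ℝ {x, y, z} := by
  have := (convex_convexHull ℝ {x, y, z}).sum_mem (t := Finset.univ) (w := ![α, β, γ])
    (z := ![x, y, z]) (fun i _ ↦ by fin_cases i <;> assumption)
    (by simp [Fin.sum_univ_three, h])
    (fun i _ ↦ by fin_cases i <;> apply subset_convexHull <;> simp)
  simpa [Fin.sum_univ_three] using this

variable {u v w b₁ b₂ : E} {a₁ c₁ t₁ a₂ c₂ t₂ : ℝ}

theorem convexHull_triangle_subset_of_mul_le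
    (hb₁ : b₁ = a₁ • u + c₁ • v + t₁ • w) (hb₂ : b₂ = a₂ • u + c₂ • v + t₂ • w)
    (hs₁ : a₁ + c₁ + t₁ = 1) (hs₂ : a₂ + c₂ + t₂ = 1) (ht₁ : 0 ≤ t₁) (ht₂ : 0 < t₂)
    (ha : a₂ * t₁ ≤ a₁ * t₂) (hc : c₂ * t₁ ≤ c₁ * t₂) :
    convexHull ℝ {u, b₁, v} ⊆ convexHull ℝ {u, b₂, v} := by
  obtain ⟨s, rfl⟩ : ∃ s, t₁ = s * t₂ := ⟨t₁ / t₂, (div_mul_cancel₀ t₁ ht₂.ne').symm⟩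
  have hmem : b₁ ∈ convexHull ℝ {u, b₂, v} := by
    have hb₁_eq : b₁ = (a₁ - a₂ * s) • u + s • b₂ + (c₁ - c₂ * s) • v := by
      rw [hb₁, hb₂]
      match_scalars <;> ring
    rw [hb₁_eq]
    refine smul_add_smul_add_smul_mem_convexHull u b₂ v ?_ (nonneg_of_mul_nonneg_left ht₁ ht₂) ?_ ?_
    · exact sub_nonneg.2 (le_of_mul_le_mul_right (by linear_combination ha) ht₂)
    · exact sub_nonneg.2 (le_of_mul_le_mul_right (by linear_combination hc) ht₂)
    · linear_combination hs₁ - s * hs₂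
  refine convexHull_min ?_ (convex_convexHull ℝ _)
  rintro x (rfl | rfl | rfl)
  · exact subset_convexHull ℝ _ (by simp)
  · exact hmem
  · exact subset_convexHull ℝ _ (by simp)

theorem exists_mem_segment_inter_segment_of_mul_le
    (hb₁ : b₁ = a₁ • u + c₁ • v + t₁ • w) (hb₂ : b₂ = a₂ • u + c₂ • v + t₂ • w)
    (hs₁ : a₁ + c₁ + t₁ = 1) (hs₂ : a₂ + c₂ + t₂ = 1) (ha₁ : 0 ≤ a₁) (hc₂ : 0 ≤ c₂)
    (ht₁ : 0 < t₁) (ht₂ : 0 < t₂) (hb₁v : b₁ ≠ v) (hb₂u : b₂ ≠ u)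
    (ha : a₂ * t₁ ≤ a₁ * t₂) (hc : c₁ * t₂ ≤ c₂ * t₁) :
    ∃ p ∈ segment ℝ u b₂ ∩ segment ℝ b₁ v, p ≠ u ∧ p ≠ v := by
  obtain rfl : a₁ = 1 - c₁ - t₁ := by linear_combination hs₁
  obtain rfl : a₂ = 1 - c₂ - t₂ := by linear_combination hs₂
  set d := (1 - c₁ - t₁) * t₂ + t₁ * t₂ + c₂ * t₁
  have hd : 0 < d := by positivity
  -- equal `w`-coefficients of the two parametrizations force `λ t₂ = μ t₁`
  have hcross : lineMap u b₂ (t₁ / d) = lineMap v b₁ (t₂ / d) := by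
    rw [lineMap_apply_module, lineMap_apply_module, hb₁, hb₂]
    match_scalars <;> field_simp <;> ring
  refine ⟨lineMap u b₂ (t₁ / d), ⟨lineMap_mem_segment ℝ u b₂ ⟨by positivity, ?_⟩, ?_⟩, ?_, ?_⟩
  · rw [div_le_one hd]
    linear_combination ha
  · rw [hcross, segment_symm]
    refine lineMap_mem_segment ℝ v b₁ ⟨by positivity, ?_⟩
    rw [div_le_one hd]
    linear_combination hc
  · simpa [hb₂u.symm] using (div_pos ht₁ hd).ne'
  · rw [hcross]
    simpa [hb₁v.symm] using (div_pos ht₂ hd).ne'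

end Barycentric

namespace AffineBasis

theorem ne_of_coord_ne_zero {ι F : Type*} [AddCommGroup F] [Module ℝ F] (B : AffineBasis ι ℝ F)
    {i j : ι} (hij : i ≠ j) {x : F} (hx : B.coord i x ≠ 0) : x ≠ B j := by
  rintro rfl
  exact hx (B.coord_apply_ne hij)

variable {E : Type*} [AddCommGroup E] [Module ℝ E] (B : AffineBasis (Fin 3) ℝ E)

theorem eq_coord_smul_add_three (x : E) :
    x = B.coord 0 x • B 0 + B.coord 1 x • B 1 + B.coord 2 x • B 2 := by
  have h := B.linear_combination_coord_eq_self x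
  rw [Fin.sum_univ_three] at h
  exact h.symm

theorem coord_add_coord_add_coord_three (x : E) : B.coord 0 x + B.coord 1 x + B.coord 2 x = 1 := by
  have h := B.sum_coord_apply_eq_one x
  rwa [Fin.sum_univ_three] at h

theorem convexHull_subset_or_exists_crossing {b₁ b₂ : E} (h₁ : ∀ i, 0 < B.coord i b₁)
    (h₂ : ∀ i, 0 < B.coord i b₂) :
    convexHull ℝ {B 0, b₁, B 1} ⊆ convexHull ℝ {B 0, b₂, B 1} ∨
      convexHull ℝ {B 0, b₂, B 1} ⊆ convexHull ℝ {B 0, b₁, B 1} ∨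
      ∃ b' : E, b' ∈ (segment ℝ (B 0) b₁ ∪ segment ℝ b₁ (B 1)) ∩
          (segment ℝ (B 0) b₂ ∪ segment ℝ b₂ (B 1)) ∧ b' ∉ ({B 0, B 1} : Set E) := by
  have e₁ := B.eq_coord_smul_add_three b₁
  have e₂ := B.eq_coord_smul_add_three b₂
  have s₁ := B.coord_add_coord_add_coord_three b₁
  have s₂ := B.coord_add_coord_add_coord_three b₂
  have hne {x : E} (hx : 0 < B.coord 2 x) (j : Fin 3) (hj : j ≠ 2) : x ≠ B j :=
    B.ne_of_coord_ne_zero hj.symm hx.ne'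
  rcases le_total (B.coord 0 b₂ * B.coord 2 b₁) (B.coord 0 b₁ * B.coord 2 b₂) with ha | ha <;>
    rcases le_total (B.coord 1 b₂ * B.coord 2 b₁) (B.coord 1 b₁ * B.coord 2 b₂) with hc | hc
  · exact .inl (convexHull_triangle_subset_of_mul_le e₁ e₂ s₁ s₂ (h₁ 2).le (h₂ 2) ha hc)
  · obtain ⟨p, ⟨hp₂, hp₁⟩, hpu, hpv⟩ := exists_mem_segment_inter_segment_of_mul_le e₁ e₂ s₁ s₂
      (h₁ 0).le (h₂ 1).le (h₁ 2) (h₂ 2) (hne (h₁ 2) 1 (by decide)) (hne (h₂ 2) 0 (by decide)) ha hc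
    exact .inr (.inr ⟨p, ⟨.inr hp₁, .inl hp₂⟩, by simp [hpu, hpv]⟩)
  · obtain ⟨p, ⟨hp₁, hp₂⟩, hpu, hpv⟩ := exists_mem_segment_inter_segment_of_mul_le e₂ e₁ s₂ s₁
      (h₂ 0).le (h₁ 1).le (h₂ 2) (h₁ 2) (hne (h₂ 2) 1 (by decide)) (hne (h₁ 2) 0 (by decide)) ha hc
    exact .inr (.inr ⟨p, ⟨.inl hp₁, .inr hp₂⟩, by simp [hpu, hpv]⟩)
  · exact .inr (.inl (convexHull_triangle_subset_of_mul_le e₂ e₁ s₂ s₁ (h₂ 2).le (h₁ 2) ha hc))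

end AffineBasis

theorem affineIndependent_of_nonempty_interior_convexHull {E ι : Type*} [NormedAddCommGroup E]
    [NormedSpace ℝ E] [FiniteDimensional ℝ E] [Fintype ι] {n : ℕ} (hE : finrank ℝ E = n)
    (hι : Fintype.card ι = n + 1) {p : ι → E} (h : (interior (convexHull ℝ (range p))).Nonempty) :
    AffineIndependent ℝ p := by
  rw [affineIndependent_iff_finrank_vectorSpan_eq ℝ p hι, ← direction_affineSpan,
    affineSpan_eq_top_of_nonempty_interior h, AffineSubspace.direction_top, finrank_top, hE]

theorem stmt_6_general (u v w : Pt)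
    (b1 b2 : Pt) (hb1 : b1 ∈ interior (convexHull ℝ {u, v, w}))
    (hb2 : b2 ∈ interior (convexHull ℝ {u, v, w})) :
    convexHull ℝ {u, b1, v} ⊆ convexHull ℝ {u, b2, v} ∨
      convexHull ℝ {u, b2, v} ⊆ convexHull ℝ {u, b1, v} ∨
      ∃ b' : Pt, b' ∈ (segment ℝ u b1 ∪ segment ℝ b1 v) ∩
          (segment ℝ u b2 ∪ segment ℝ b2 v) ∧ b' ∉ ({u, v} : Set Pt) := by
  have hrange : range ![u, v, w] = {u, v, w} := by
    rw [Matrix.range_cons, Matrix.range_cons_cons_empty, singleton_union]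
  have hne : (interior (convexHull ℝ (range ![u, v, w]))).Nonempty := ⟨b1, hrange ▸ hb1⟩
  let B : AffineBasis (Fin 3) ℝ Pt :=
    ⟨![u, v, w], affineIndependent_of_nonempty_interior_convexHull finrank_euclideanSpace_fin rfl hne,
      affineSpan_eq_top_of_nonempty_interior hne⟩
  have hpos {b : Pt} (hb : b ∈ interior (convexHull ℝ {u, v, w})) (i : Fin 3) : 0 < B.coord i b := by
    rw [← hrange, show ![u, v, w] = ⇑B from rfl, B.interior_convexHull] at hb
    exact hb i
  exact B.convexHull_subset_or_exists_crossing (hpos hb1) (hpos hb2)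

theorem stmt_6 (u v w : Pt) (hw : w ∉ affineSpan ℝ ({u, v} : Set Pt))
    (b1 b2 : Pt) (hb1 : b1 ∈ interior (convexHull ℝ {u, v, w}))
    (hb2 : b2 ∈ interior (convexHull ℝ {u, v, w})) :
    convexHull ℝ {u, b1, v} ⊆ convexHull ℝ {u, b2, v} ∨
      convexHull ℝ {u, b2, v} ⊆ convexHull ℝ {u, b1, v} ∨
      ∃ b' : Pt, b' ∈ (segment ℝ u b1 ∪ segment ℝ b1 v) ∩
          (segment ℝ u b2 ∪ segment ℝ b2 v) ∧ b' ∉ ({u, v} : Set Pt) :=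
  stmt_6_general u v w b1 b2 hb1 hb2
end

section
/- Let u, v be distinct points in ℝ² and let b1, b2 be points strictly on the same open side of line uv such that the triangles T1 = conv{u, b1, v} and T2 = conv{u, b2, v} satisfy T1 ⊄ T2 and T2 ⊄ T1. Then the boundaries of T1 and T2 intersect at a point b' ∉ [u,v], and conv{u, b', v} ⊆ T1 ∩ T2. -/
/-! Orient both apexes to the left of `u → v`, via the sign of the oriented area `orient u v ·`,
which same-side points share. A point of a triangle with nonnegative orientation with respect to
all three edges lies in it, so `b₂ ∉ T₁` and `b₁ ∉ T₂` force the edges `[v, b₁]` and `[u, b₂]`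
(or `[v, b₂]` and `[u, b₁]`) to cross. The crossing point `b'` lies on an edge of each triangle,
with the whole triangle on one side of that edge, hence on both frontiers; it is strictly left of
`u → v`, and `conv {u, b', v} ⊆ T₁ ∩ T₂` by convexity. -/

namespace PlaneTriangle

open AffineMap

/-- Twice the signed area of the triangle `a b c`; positive iff `a, b, c` run counterclockwise. -/
def orient (a b c : Pt) : ℝ := (b 0 - a 0) * (c 1 - a 1) - (b 1 - a 1) * (c 0 - a 0)

lemma orient_rotate (a b c : Pt) : orient a b c = orient b c a := by unfold orient; ring

lemma orient_swap (a b c : Pt) : orient a b c = -orient b a c := by unfold orient; ring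

@[simp] lemma orient_self_left (a b : Pt) : orient a b a = 0 := by unfold orient; ring

@[simp] lemma orient_self_right (a b : Pt) : orient a b b = 0 := by unfold orient; ring

lemma orient_smul_add_smul (a b x y : Pt) {p q : ℝ} (h : p + q = 1) :
    orient a b (p • x + q • y) = p * orient a b x + q * orient a b y := by
  obtain rfl : q = 1 - p := by linarith
  simp only [orient, PiLp.add_apply, PiLp.smul_apply, smul_eq_mul]
  ring

lemma orient_lineMap (a b x y : Pt) (t : ℝ) :
    orient a b (lineMap x y t) = (1 - t) * orient a b x + t * orient a b y := by
  rw [lineMap_apply_module, orient_smul_add_smul _ _ _ _ (by ring)]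

lemma convex_setOf_orient_nonneg (a b : Pt) : Convex ℝ {x : Pt | 0 ≤ orient a b x} := by
  intro x hx y hy p q hp hq hpq
  rw [Set.mem_ofPred_eq, orient_smul_add_smul a b x y hpq]
  exact add_nonneg (mul_nonneg hp hx) (mul_nonneg hq hy)

lemma orient_eq_zero_of_mem_affineSpan {u v p : Pt} (hp : p ∈ line[ℝ, u, v]) :
    orient u v p = 0 := by
  obtain ⟨r, rfl⟩ := mem_affineSpan_pair_iff_exists_lineMap_eq.1 hp
  simp [orient_lineMap]

lemma mem_affineSpan_of_orient_eq_zero {u v p : Pt} (huv : u ≠ v) (hp : orient u v p = 0) :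
    p ∈ line[ℝ, u, v] := by
  have hN : (v 0 - u 0) ^ 2 + (v 1 - u 1) ^ 2 ≠ 0 := by
    intro h0
    refine huv (PiLp.ext fun i => ?_)
    fin_cases i <;> simp <;> nlinarith [sq_nonneg (v 0 - u 0), sq_nonneg (v 1 - u 1)]
  refine mem_affineSpan_pair_iff_exists_lineMap_eq.2
    ⟨((v 0 - u 0) * (p 0 - u 0) + (v 1 - u 1) * (p 1 - u 1)) /
      ((v 0 - u 0) ^ 2 + (v 1 - u 1) ^ 2), PiLp.ext fun i => ?_⟩
  unfold orient at hp
  fin_cases i <;> simp [lineMap_apply_module] <;> field_simp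
  · linear_combination (v 1 - u 1) * hp
  · linear_combination -(v 0 - u 0) * hp

lemma smul_add_smul_add_smul_mem_convexHull {E : Type*} [AddCommGroup E] [Module ℝ E]
    (a b c : E) {α β γ : ℝ} (hα : 0 ≤ α) (hβ : 0 ≤ β) (hγ : 0 ≤ γ) (h : α + β + γ = 1) :
    α • a + β • b + γ • c ∈ convexHull ℝ {a, b, c} := by
  have := (convex_convexHull ℝ ({a, b, c} : Set E)).sum_mem (t := Finset.univ)
    (w := ![α, β, γ]) (z := ![a, b, c]) (by simp [Fin.forall_fin_succ, *])
    (by simp [Fin.sum_univ_three, h])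
    (by simp [Fin.forall_fin_succ, subset_convexHull ℝ _ _])
  simpa [Fin.sum_univ_three] using this

lemma mem_convexHull_of_orient_nonneg {u v b x : Pt} (hb : 0 < orient u v b)
    (hu : 0 ≤ orient v b x) (hv : 0 ≤ orient b u x) (hx : 0 ≤ orient u v x) :
    x ∈ convexHull ℝ {u, b, v} := by
  have hbary : x = (orient v b x / orient u v b) • u + (orient u v x / orient u v b) • b +
      (orient b u x / orient u v b) • v := by
    ext i
    fin_cases i <;>
      simp only [Fin.zero_eta, Fin.mk_one, PiLp.add_apply, PiLp.smul_apply, smul_eq_mul] <;>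
      field_simp <;> unfold orient <;> ring
  rw [hbary]
  exact smul_add_smul_add_smul_mem_convexHull u b v (by positivity) (by positivity)
    (by positivity) (by field_simp; unfold orient; ring)

open Filter Topology in
lemma mem_frontier_convexHull_of_orient_eq_zero {s : Set Pt} (hs : s.Finite) {a c x z : Pt}
    (hsub : ∀ y ∈ s, 0 ≤ orient a c y) (hx : x ∈ convexHull ℝ s) (hx0 : orient a c x = 0)
    (hz : orient a c z < 0) : x ∈ frontier (convexHull ℝ s) := by
  have hhalf : convexHull ℝ s ⊆ {y | 0 ≤ orient a c y} :=
    convexHull_min hsub (convex_setOf_orient_nonneg a c)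
  rw [(hs.isCompact_convexHull ℝ).isClosed.frontier_eq]
  refine ⟨hx, fun hint => ?_⟩
  have hnear : ∀ᶠ t in 𝓝[>] (0 : ℝ), lineMap x z t ∈ convexHull ℝ s :=
    ((lineMap_continuous.tendsto' 0 x (lineMap_apply_zero _ _)).mono_left
      nhdsWithin_le_nhds).eventually (mem_interior_iff_mem_nhds.1 hint)
  obtain ⟨t, ht, ht0 : 0 < t⟩ := (hnear.and self_mem_nhdsWithin).exists
  have := hhalf ht
  rw [Set.mem_ofPred_eq, orient_lineMap, hx0] at this
  nlinarith

lemma orient_mul_pos_of_sSameSide {u v b1 b2 : Pt} (huv : u ≠ v)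
    (h : line[ℝ, u, v].SSameSide b1 b2) : 0 < orient u v b1 * orient u v b2 := by
  obtain ⟨⟨p1, hp1, p2, hp2, hray⟩, hb1, hb2⟩ := h
  have hne1 : orient u v b1 ≠ 0 := fun h0 => hb1 (mem_affineSpan_of_orient_eq_zero huv h0)
  have hne2 : orient u v b2 ≠ 0 := fun h0 => hb2 (mem_affineSpan_of_orient_eq_zero huv h0)
  have hz1 := orient_eq_zero_of_mem_affineSpan hp1
  have hz2 := orient_eq_zero_of_mem_affineSpan hp2
  obtain ⟨r1, r2, hr1, hr2, heq⟩ := hray.exists_pos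
    (vsub_ne_zero.2 (ne_of_mem_of_not_mem hp1 hb1).symm)
    (vsub_ne_zero.2 (ne_of_mem_of_not_mem hp2 hb2).symm)
  have heq0 := congrArg (· 0) heq
  have heq1 := congrArg (· 1) heq
  simp only [vsub_eq_sub, PiLp.smul_apply, PiLp.sub_apply, smul_eq_mul] at heq0 heq1
  have hscale : r1 * orient u v b1 = r2 * orient u v b2 := by
    unfold orient at *
    linear_combination (v 0 - u 0) * heq1 - (v 1 - u 1) * heq0 + r1 * hz1 - r2 * hz2
  have hsq : 0 < (r1 * orient u v b1) ^ 2 := by positivity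
  refine (pos_iff_pos_of_mul_pos (a := r1 * r2) ?_).1 (mul_pos hr1 hr2)
  rwa [show r1 * r2 * (orient u v b1 * orient u v b2) = (r1 * orient u v b1) ^ 2 by
    linear_combination -(r1 * orient u v b1) * hscale]

lemma exists_apex_of_orient_neg {u v b1 b2 : Pt} (h1 : 0 < orient u v b1)
    (h2 : 0 < orient u v b2) (hv : orient v b1 b2 < 0) (hu : orient u b1 b2 < 0) :
    ∃ b' : Pt, b' ∈ frontier (convexHull ℝ {u, b1, v}) ∩
        frontier (convexHull ℝ {u, b2, v}) ∧ b' ∉ segment ℝ u v ∧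
      convexHull ℝ {u, b', v} ⊆
        convexHull ℝ {u, b1, v} ∩ convexHull ℝ {u, b2, v} := by
  have hv_eq : orient v b1 b2 = orient u v b1 - orient u v b2 + orient u b1 b2 := by
    unfold orient; ring
  have hden : 0 < orient u v b2 - orient u b1 b2 := by linarith
  set t := orient u v b2 / (orient u v b2 - orient u b1 b2)
  set s := orient u v b1 / (orient u v b2 - orient u b1 b2)
  have ht : t ∈ Set.Icc (0 : ℝ) 1 :=
    ⟨by positivity, (div_le_one hden).2 (by linarith)⟩
  have hs : s ∈ Set.Icc (0 : ℝ) 1 :=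
    ⟨by positivity, (div_le_one hden).2 (by linarith)⟩
  -- `t` and `s` solve `lineMap v b1 t = lineMap u b2 s` by Cramer's rule.
  have hcross : lineMap v b1 t = lineMap u b2 s := by
    ext i
    fin_cases i <;> simp only [Fin.zero_eta, Fin.mk_one, lineMap_apply_module, PiLp.add_apply,
      PiLp.smul_apply, smul_eq_mul, t, s] <;> field_simp <;> unfold orient <;> ring
  set b' := lineMap v b1 t
  have hT1 : b' ∈ convexHull ℝ {u, b1, v} :=
    segment_subset_convexHull (by simp) (by simp) (lineMap_mem_segment ℝ v b1 ht)
  have hT2 : b' ∈ convexHull ℝ {u, b2, v} :=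
    hcross ▸ segment_subset_convexHull (by simp) (by simp) (lineMap_mem_segment ℝ u b2 hs)
  refine ⟨b', ⟨?_, ?_⟩, ?_, ?_⟩
  · refine mem_frontier_convexHull_of_orient_eq_zero (Set.toFinite _) ?_ hT1
      (by simp [b', orient_lineMap]) hv
    simp [← orient_rotate u v b1, h1.le]
  · refine mem_frontier_convexHull_of_orient_eq_zero (a := b2) (c := u) (Set.toFinite _) ?_ hT2
      (by simp [hcross, orient_lineMap])
      (by rwa [← orient_rotate b1 b2 u, ← orient_rotate u b1 b2])
    simp [← orient_rotate v b2 u, ← orient_rotate u v b2, h2.le]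
  · rw [segment_eq_image_lineMap]
    rintro ⟨r, -, hr⟩
    have hb' : orient u v b' = t * orient u v b1 := by simp [b', orient_lineMap]
    have hr' : orient u v b' = 0 := by simp [← hr, orient_lineMap]
    have ht0 : 0 < t := by positivity
    exact (mul_pos ht0 h1).ne' (hb' ▸ hr')
  · refine (convex_convexHull ℝ _ |>.inter (convex_convexHull ℝ _)).convexHull_subset_iff.2 ?_
    simp [Set.insert_subset_iff, hT1, hT2, subset_convexHull ℝ _ _]

lemma orient_neg_or_orient_neg_of_notMem {u v b1 b2 : Pt} (h1 : 0 < orient u v b1)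
    (h2 : 0 < orient u v b2) (hb2 : b2 ∉ convexHull ℝ {u, b1, v})
    (hb1 : b1 ∉ convexHull ℝ {u, b2, v}) :
    (orient v b1 b2 < 0 ∧ orient u b1 b2 < 0) ∨ (orient v b2 b1 < 0 ∧ orient u b2 b1 < 0) := by
  have c1 : orient v b1 b2 < 0 ∨ orient b1 u b2 < 0 := by
    by_contra! h
    exact hb2 (mem_convexHull_of_orient_nonneg h1 h.1 h.2 h2.le)
  have c2 : orient v b2 b1 < 0 ∨ orient b2 u b1 < 0 := by
    by_contra! h
    exact hb1 (mem_convexHull_of_orient_nonneg h2 h.1 h.2 h1.le)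
  have e1 : orient v b2 b1 = -orient v b1 b2 := by unfold orient; ring
  have e2 : orient b2 u b1 = orient u b1 b2 := by unfold orient; ring
  have e3 : orient b1 u b2 = -orient u b1 b2 := by unfold orient; ring
  have e4 : orient u b2 b1 = -orient u b1 b2 := by unfold orient; ring
  rcases c1 with c1 | c1 <;> rcases c2 with c2 | c2
  · linarith
  · exact .inl ⟨c1, by linarith⟩
  · exact .inr ⟨c2, by linarith⟩
  · linarith

lemma notMem_convexHull_of_not_subset {E : Type*} [AddCommGroup E] [Module ℝ E] {u v b1 b2 : E}
    (h : ¬ convexHull ℝ {u, b1, v} ⊆ convexHull ℝ {u, b2, v}) :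
    b1 ∉ convexHull ℝ {u, b2, v} := fun hb1 =>
  h <| (convex_convexHull ℝ _).convexHull_subset_iff.2 <| by
    simp [Set.insert_subset_iff, hb1, subset_convexHull ℝ _ _]

lemma set_triple_reverse {α : Type*} (a b c : α) : ({a, b, c} : Set α) = {c, b, a} := by
  rw [Set.pair_comm, Set.insert_comm, Set.pair_comm]

end PlaneTriangle

open PlaneTriangle in
theorem stmt_10 (u v b1 b2 : Pt) (huv : u ≠ v)
    (hside : AffineSubspace.SSameSide (affineSpan ℝ {u, v}) b1 b2)
    (h12 : ¬ convexHull ℝ {u, b1, v} ⊆ convexHull ℝ {u, b2, v})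
    (h21 : ¬ convexHull ℝ {u, b2, v} ⊆ convexHull ℝ {u, b1, v}) :
    ∃ b' : Pt, b' ∈ frontier (convexHull ℝ {u, b1, v}) ∩
        frontier (convexHull ℝ {u, b2, v}) ∧ b' ∉ segment ℝ u v ∧
      convexHull ℝ {u, b', v} ⊆
        convexHull ℝ {u, b1, v} ∩ convexHull ℝ {u, b2, v} := by
  have hmul := orient_mul_pos_of_sSameSide huv hside
  wlog h1 : 0 < orient u v b1 generalizing u v
  · have hvu : 0 < orient v u b1 := by
      rw [orient_swap, neg_pos]
      exact (not_lt.1 h1).lt_of_ne (left_ne_zero_of_mul hmul.ne')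
    obtain ⟨b', hfr, hseg, hsub⟩ := this v u huv.symm (by rwa [Set.pair_comm])
      (by rwa [set_triple_reverse v, set_triple_reverse v])
      (by rwa [set_triple_reverse v, set_triple_reverse v])
      (by rwa [orient_swap v u, orient_swap v u, neg_mul_neg]) hvu
    rw [set_triple_reverse v b1 u, set_triple_reverse v b2 u] at hfr hsub
    rw [set_triple_reverse v b' u] at hsub
    exact ⟨b', hfr, segment_symm ℝ u v ▸ hseg, hsub⟩
  have h2 : 0 < orient u v b2 := (pos_iff_pos_of_mul_pos hmul).1 h1
  rcases orient_neg_or_orient_neg_of_notMem h1 h2 (notMem_convexHull_of_not_subset h21)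
    (notMem_convexHull_of_not_subset h12) with ⟨hv, hu⟩ | ⟨hv, hu⟩
  · exact exists_apex_of_orient_neg h1 h2 hv hu
  · obtain ⟨b', ⟨hfr2, hfr1⟩, hseg, hsub⟩ := exists_apex_of_orient_neg h2 h1 hv hu
    exact ⟨b', ⟨hfr1, hfr2⟩, hseg, hsub.trans (Set.inter_comm _ _).subset⟩
end
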